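/- Let H_1, H_2 be n×n complex Hermitian matrices with operator norms ‖H_1‖ ≤ 1 and ‖H_2‖ ≤ 1, and suppose δ := ‖[H_1,H_2]‖_tr ≤ 1/16. Then there exist n×n complex Hermitian matrices A_1, A_2 with ‖A_1‖ ≤ 1, ‖A_2‖ ≤ 1, such that [A_1,A_2] = 0, [H_1,A_1] = 0, ‖H_1 - A_1‖_tr ≤ 2δ^{1/4}, and ‖H_2 - A_2‖_tr ≤ √3 · δ^{1/4}. -/

import Mathlib

/-- Normalized Hilbert–Schmidt norm: `‖A‖_tr = ((1/n) ∑_{i,j} |a_ij|²)^{1/2}`. -/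
noncomputable def hsNorm {n : ℕ} (A : Matrix (Fin n) (Fin n) ℂ) : ℝ :=
  Real.sqrt ((1 / (n : ℝ)) * ∑ i, ∑ j, ‖A i j‖ ^ 2)

/-- Operator norm of a matrix acting on `ℂⁿ` (with the Euclidean norm). -/
noncomputable def opNorm {n : ℕ} (A : Matrix (Fin n) (Fin n) ℂ) : ℝ :=
  ‖(Matrix.toEuclideanCLM (𝕜 := ℂ) A : EuclideanSpace ℂ (Fin n) →L[ℂ] EuclideanSpace ℂ (Fin n))‖

/-!
Diagonalize `H₁ = U D U*` with `D = diag(d)` and put `K = U* H₂ U`, so that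
`[D, K]_ij = (d_i - d_j) K_ij`. Cut the line into bins of width `ε = √δ` at a random offset `t`.
`A₁` moves every eigenvalue to the left end of its bin, and `A₂` keeps only the entries `K_ij`
with `d_i`, `d_j` in the same bin (a pinching, hence still a contraction commuting with `A₁`).
Two eigenvalues are separated with probability at most `|d_i - d_j| / ε`, so for a good offset
the discarded mass is at most `ε⁻¹ ∑ |K_ij|² |d_i - d_j| = ε⁻¹ ∑ |K_ij| |[D, K]_ij| ≤ n δ / ε`
by Cauchy–Schwarz, i.e. `‖H₂ - A₂‖_tr² ≤ √δ`, while `‖H₁ - A₁‖_tr ≤ ε = √δ`.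
-/

open Matrix Unitary MeasureTheory Set
open scoped Matrix.Norms.L2Operator

variable {n : ℕ}

lemma opNorm_eq_norm (A : Matrix (Fin n) (Fin n) ℂ) : opNorm A = ‖A‖ := rfl

lemma opNorm_nonneg (A : Matrix (Fin n) (Fin n) ℂ) : 0 ≤ opNorm A := norm_nonneg _

lemma hsNorm_nonneg (A : Matrix (Fin n) (Fin n) ℂ) : 0 ≤ hsNorm A := Real.sqrt_nonneg _

lemma opNorm_conjStarAlgAut (u : unitary (Matrix (Fin n) (Fin n) ℂ))
    (A : Matrix (Fin n) (Fin n) ℂ) : opNorm (conjStarAlgAut ℂ _ u A) = opNorm A := by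
  simp only [opNorm_eq_norm, conjStarAlgAut_apply,
    CStarRing.norm_mul_mem_unitary _ (Unitary.star_mem u.2), CStarRing.norm_mem_unitary_mul _ u.2]

lemma sum_norm_sq_mulVec_le (A : Matrix (Fin n) (Fin n) ℂ) (v : Fin n → ℂ) :
    ∑ i, ‖(A *ᵥ v) i‖ ^ 2 ≤ opNorm A ^ 2 * ∑ i, ‖v i‖ ^ 2 := by
  have h := pow_le_pow_left₀ (norm_nonneg _) (A.l2_opNorm_mulVec (WithLp.toLp 2 v)) 2
  rwa [mul_pow, EuclideanSpace.norm_sq_eq, EuclideanSpace.norm_sq_eq] at h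

lemma opNorm_le_of_sum_norm_sq_mulVec_le {A : Matrix (Fin n) (Fin n) ℂ} {c : ℝ} (hc : 0 ≤ c)
    (h : ∀ v : Fin n → ℂ, ∑ i, ‖(A *ᵥ v) i‖ ^ 2 ≤ c ^ 2 * ∑ i, ‖v i‖ ^ 2) :
    opNorm A ≤ c := by
  refine ContinuousLinearMap.opNorm_le_bound _ hc fun x => ?_
  refine le_of_pow_le_pow_left₀ two_ne_zero (by positivity) ?_
  simpa only [mul_pow, EuclideanSpace.norm_sq_eq, ofLp_toEuclideanCLM] using h x.ofLp

lemma sum_norm_sq_col_le_opNorm_sq (A : Matrix (Fin n) (Fin n) ℂ) (j : Fin n) :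
    ∑ i, ‖A i j‖ ^ 2 ≤ opNorm A ^ 2 := by
  simpa [Pi.single_apply, apply_ite, Finset.sum_ite_eq'] using
    sum_norm_sq_mulVec_le A (Pi.single j 1)

lemma sum_norm_sq_eq_mul_hsNorm_sq (A : Matrix (Fin n) (Fin n) ℂ) :
    ∑ i, ∑ j, ‖A i j‖ ^ 2 = n * hsNorm A ^ 2 := by
  rcases n.eq_zero_or_pos with rfl | hn
  · simp
  · rw [hsNorm, Real.sq_sqrt (by positivity)]
    field_simp

lemma hsNorm_le_of_sum_norm_sq_le {A : Matrix (Fin n) (Fin n) ℂ} {c : ℝ} (hc : 0 ≤ c)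
    (h : ∑ i, ∑ j, ‖A i j‖ ^ 2 ≤ n * c ^ 2) : hsNorm A ≤ c := by
  rcases n.eq_zero_or_pos with rfl | hn
  · simpa [hsNorm] using hc
  · rw [sum_norm_sq_eq_mul_hsNorm_sq] at h
    exact le_of_pow_le_pow_left₀ two_ne_zero hc (le_of_mul_le_mul_left h (by positivity))

lemma eq_zero_of_hsNorm_eq_zero {A : Matrix (Fin n) (Fin n) ℂ} (h : hsNorm A = 0) : A = 0 := by
  have hsum := sum_norm_sq_eq_mul_hsNorm_sq A
  rw [h, zero_pow two_ne_zero, mul_zero] at hsum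
  ext i j
  have hrow := (Finset.sum_eq_zero_iff_of_nonneg fun i _ => by positivity).1 hsum i
    (Finset.mem_univ i)
  simpa using (Finset.sum_eq_zero_iff_of_nonneg fun j _ => by positivity).1 hrow j
    (Finset.mem_univ j)

lemma hsNorm_le_opNorm (A : Matrix (Fin n) (Fin n) ℂ) : hsNorm A ≤ opNorm A := by
  refine hsNorm_le_of_sum_norm_sq_le (opNorm_nonneg A) ?_
  rw [Finset.sum_comm]
  simpa using Finset.sum_le_sum fun j (_ : j ∈ Finset.univ) => sum_norm_sq_col_le_opNorm_sq A j

lemma sum_norm_sq_eq_re_trace (A : Matrix (Fin n) (Fin n) ℂ) :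
    ∑ i, ∑ j, ‖A i j‖ ^ 2 = (Aᴴ * A).trace.re := by
  simp only [trace, diag_apply, mul_apply, conjTranspose_apply, Complex.re_sum, RCLike.star_def,
    RCLike.conj_mul]
  rw [Finset.sum_comm]
  norm_cast

lemma hsNorm_conjStarAlgAut (u : unitary (Matrix (Fin n) (Fin n) ℂ))
    (A : Matrix (Fin n) (Fin n) ℂ) : hsNorm (conjStarAlgAut ℂ _ u A) = hsNorm A := by
  have h : (conjStarAlgAut ℂ _ u A)ᴴ * conjStarAlgAut ℂ _ u A
      = conjStarAlgAut ℂ _ u (Aᴴ * A) := by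
    rw [← star_eq_conjTranspose, ← map_star, ← map_mul, star_eq_conjTranspose]
  rw [hsNorm, hsNorm, sum_norm_sq_eq_re_trace, sum_norm_sq_eq_re_trace, h,
    conjStarAlgAut_apply, trace_mul_cycle, ← mul_assoc, coe_star_mul_self, one_mul]

lemma sum_norm_mul_norm_le_hsNorm_mul_hsNorm (A B : Matrix (Fin n) (Fin n) ℂ) :
    ∑ i, ∑ j, ‖A i j‖ * ‖B i j‖ ≤ n * (hsNorm A * hsNorm B) := by
  have h := Real.sum_mul_le_sqrt_mul_sqrt Finset.univ (fun p : Fin n × Fin n => ‖A p.1 p.2‖)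
    (fun p => ‖B p.1 p.2‖)
  simp only [Fintype.sum_prod_type, sum_norm_sq_eq_mul_hsNorm_sq] at h
  rwa [Real.sqrt_mul (Nat.cast_nonneg n), Real.sqrt_mul (Nat.cast_nonneg n),
    Real.sqrt_sq (hsNorm_nonneg A), Real.sqrt_sq (hsNorm_nonneg B), mul_mul_mul_comm,
    Real.mul_self_sqrt (Nat.cast_nonneg n)] at h

lemma hsNorm_diagonal_le {v : Fin n → ℂ} {c : ℝ} (hc : 0 ≤ c) (h : ∀ i, ‖v i‖ ≤ c) :
    hsNorm (diagonal v) ≤ c := by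
  refine hsNorm_le_of_sum_norm_sq_le hc ?_
  simp only [diagonal_apply, apply_ite (fun z : ℂ => ‖z‖ ^ 2), norm_zero, zero_pow two_ne_zero,
    Finset.sum_ite_eq, Finset.mem_univ, if_true]
  simpa using Finset.sum_le_sum fun i (_ : i ∈ Finset.univ) =>
    pow_le_pow_left₀ (norm_nonneg _) (h i) 2

section Pinch

variable {ι m α : Type*} [DecidableEq ι] (k : m → ι)

def pinch [Zero α] (K : Matrix m m α) : Matrix m m α :=
  of fun i j => if k i = k j then K i j else 0

lemma pinch_apply [Zero α] (K : Matrix m m α) (i j : m) :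
    pinch k K i j = if k i = k j then K i j else 0 := rfl

lemma sub_pinch_apply [AddGroup α] (K : Matrix m m α) (i j : m) :
    (K - pinch k K) i j = if k i = k j then 0 else K i j := by
  by_cases h : k i = k j <;> simp [pinch_apply, h]

lemma Matrix.IsHermitian.pinch [AddMonoid α] [StarAddMonoid α] {K : Matrix m m α}
    (hK : K.IsHermitian) : (pinch k K).IsHermitian := by
  ext i j
  simp only [conjTranspose_apply, pinch_apply, eq_comm (a := k j)]
  split_ifs <;> simp [hK.apply]

lemma commute_diagonal_comp_pinch [Fintype m] [DecidableEq m] [CommSemiring α] (g : ι → α)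
    (K : Matrix m m α) : Commute (diagonal (g ∘ k)) (pinch k K) := by
  ext i j
  simp only [diagonal_mul, mul_diagonal, pinch_apply, Function.comp_apply]
  split_ifs with h
  · rw [h, mul_comm]
  · simp

lemma pinch_mulVec [Fintype m] [NonUnitalNonAssocSemiring α] (K : Matrix m m α) (v : m → α)
    (i : m) : (pinch k K *ᵥ v) i = (K *ᵥ fun j => if k j = k i then v j else 0) i := by
  simp only [mulVec, dotProduct, pinch_apply, eq_comm (a := k i)]
  exact Finset.sum_congr rfl fun j _ => by split_ifs <;> simp

lemma opNorm_pinch_le (k : Fin n → ι) (K : Matrix (Fin n) (Fin n) ℂ) :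
    opNorm (pinch k K) ≤ opNorm K := by
  refine opNorm_le_of_sum_norm_sq_mulVec_le (opNorm_nonneg K) fun v => ?_
  set w : ι → Fin n → ℂ := fun c j => if k j = c then v j else 0
  have hk : ∀ i, k i ∈ Finset.univ.image k := fun i => Finset.mem_image_of_mem k (Finset.mem_univ i)
  calc ∑ i, ‖(pinch k K *ᵥ v) i‖ ^ 2 = ∑ i, ‖(K *ᵥ w (k i)) i‖ ^ 2 := by
        simp only [pinch_mulVec, w]
    _ ≤ ∑ i, ∑ c ∈ Finset.univ.image k, ‖(K *ᵥ w c) i‖ ^ 2 :=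
        Finset.sum_le_sum fun i _ => Finset.single_le_sum (f := fun c => ‖(K *ᵥ w c) i‖ ^ 2)
          (fun _ _ => by positivity) (hk i)
    _ = ∑ c ∈ Finset.univ.image k, ∑ i, ‖(K *ᵥ w c) i‖ ^ 2 := Finset.sum_comm
    _ ≤ ∑ c ∈ Finset.univ.image k, opNorm K ^ 2 * ∑ j, ‖w c j‖ ^ 2 :=
        Finset.sum_le_sum fun c _ => sum_norm_sq_mulVec_le K (w c)
    _ = opNorm K ^ 2 * ∑ j, ‖v j‖ ^ 2 := by
        rw [← Finset.mul_sum, Finset.sum_comm]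
        simp [w, apply_ite (fun z : ℂ => ‖z‖ ^ 2), Finset.sum_ite_eq, hk]

end Pinch

-- If `t` separates `x ≤ y`, some `t + mε` lies in `(x, y] ∩ (mε, (m+1)ε]`; these pieces are
-- disjoint, so the translates cover a set of measure at most `y - x`.
lemma volume_floor_ne_inter_Ioc_le {ε : ℝ} (hε : 0 < ε) (x y : ℝ) :
    volume ({t | ⌊(x - t) / ε⌋ ≠ ⌊(y - t) / ε⌋} ∩ Ioc 0 ε) ≤ ENNReal.ofReal |x - y| := by
  wlog hxy : x ≤ y generalizing x y
  · simpa only [ne_comm, abs_sub_comm] using this y x (le_of_not_ge hxy)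
  set I : ℤ → Set ℝ := fun m => Ioc x y ∩ Ioc (m • ε) ((m + 1) • ε)
  have hcover : {t | ⌊(x - t) / ε⌋ ≠ ⌊(y - t) / ε⌋} ∩ Ioc 0 ε ⊆
      ⋃ m : ℤ, (· + m • ε) ⁻¹' I m := by
    rintro t ⟨hcut, ht0, htε⟩
    set m := ⌊(y - t) / ε⌋
    have hlt : ⌊(x - t) / ε⌋ < m := (Int.floor_le_floor (by gcongr)).lt_of_ne hcut
    have h₁ : m * ε ≤ y - t := (le_div_iff₀ hε).1 (Int.floor_le _)
    have h₂ : x - t < m * ε := (div_lt_iff₀ hε).1 (Int.floor_lt.1 hlt)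
    refine mem_iUnion.2 ⟨m, ⟨?_, ?_⟩, ?_, ?_⟩ <;>
      simp only [zsmul_eq_mul, Int.cast_add, Int.cast_one] <;> linarith
  have hdisj : Pairwise (Function.onFun Disjoint I) := fun a b hab =>
    (pairwise_disjoint_Ioc_zsmul ε hab).mono inter_subset_right inter_subset_right
  calc volume ({t | ⌊(x - t) / ε⌋ ≠ ⌊(y - t) / ε⌋} ∩ Ioc 0 ε)
      ≤ volume (⋃ m : ℤ, (· + m • ε) ⁻¹' I m) := measure_mono hcover
    _ ≤ ∑' m : ℤ, volume ((· + m • ε) ⁻¹' I m) := measure_iUnion_le _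
    _ = ∑' m : ℤ, volume (I m) := by simp only [measure_preimage_add_right]
    _ = volume (⋃ m, I m) :=
        (measure_iUnion hdisj fun _ => measurableSet_Ioc.inter measurableSet_Ioc).symm
    _ ≤ volume (Ioc x y) := measure_mono (iUnion_subset fun _ => inter_subset_left)
    _ = ENNReal.ofReal |x - y| := by
        rw [Real.volume_Ioc, abs_sub_comm, abs_of_nonneg (by linarith)]

lemma exists_shift_sum_floor_ne_le {ι : Type*} [Fintype ι] (x : ι → ℝ) (w : ι → ι → ℝ)
    (hw : ∀ i j, 0 ≤ w i j) {ε : ℝ} (hε : 0 < ε) :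
    ∃ t : ℝ, ∑ i, ∑ j, (if ⌊(x i - t) / ε⌋ = ⌊(x j - t) / ε⌋ then 0 else w i j)
      ≤ ε⁻¹ * ∑ i, ∑ j, w i j * |x i - x j| := by
  set S : ι → ι → Set ℝ := fun i j => {t | ⌊(x i - t) / ε⌋ ≠ ⌊(x j - t) / ε⌋}
  have hS : ∀ i j, MeasurableSet (S i j) := fun i j =>
    (measurableSet_eq_fun (by fun_prop) (by fun_prop)).compl
  have hSint : ∀ i j, IntegrableOn ((S i j).indicator fun _ => w i j) (Ioc 0 ε) := fun i j =>
    (integrable_const (w i j)).indicator (hS i j)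
  set F : ℝ → ℝ := fun t => ∑ i, ∑ j, (S i j).indicator (fun _ => w i j) t
  have hF : IntegrableOn F (Ioc 0 ε) :=
    integrable_finsetSum _ fun i _ => integrable_finsetSum _ fun j _ => hSint i j
  have hintegral : ∫ t in Ioc 0 ε, F t = ∑ i, ∑ j, w i j * volume.real (S i j ∩ Ioc 0 ε) := by
    rw [integral_finsetSum _ fun i _ => integrable_finsetSum _ fun j _ => hSint i j]
    refine Finset.sum_congr rfl fun i _ => ?_
    rw [integral_finsetSum _ fun j _ => hSint i j]
    refine Finset.sum_congr rfl fun j _ => ?_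
    rw [integral_indicator_const _ (hS i j), measureReal_restrict_apply (hS i j), smul_eq_mul,
      mul_comm]
  obtain ⟨t, -, ht⟩ := exists_le_setAverage (by simp [hε]) (by simp) hF
  refine ⟨t, ?_⟩
  calc ∑ i, ∑ j, (if ⌊(x i - t) / ε⌋ = ⌊(x j - t) / ε⌋ then 0 else w i j) = F t := by
        simp only [F, S, indicator_apply, mem_ofPred_eq, ite_not]
    _ ≤ ε⁻¹ * ∑ i, ∑ j, w i j * volume.real (S i j ∩ Ioc 0 ε) := by
        rwa [setAverage_eq, Real.volume_real_Ioc_of_le hε.le, sub_zero, hintegral,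
          smul_eq_mul] at ht
    _ ≤ ε⁻¹ * ∑ i, ∑ j, w i j * |x i - x j| := by
        gcongr with i _ j _
        · exact hw i j
        · exact ENNReal.toReal_le_of_le_ofReal (abs_nonneg _)
            (volume_floor_ne_inter_Ioc_le hε _ _)

lemma diagonal_mul_sub_mul_diagonal_apply {m α : Type*} [Fintype m] [DecidableEq m] [CommRing α]
    (d : m → α) (K : Matrix m m α) (i j : m) :
    (diagonal d * K - K * diagonal d) i j = (d i - d j) * K i j := by
  rw [Matrix.sub_apply, diagonal_mul, mul_diagonal, sub_mul, mul_comm (K i j)]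

lemma sum_norm_sq_mul_abs_sub_le (d : Fin n → ℝ) (K : Matrix (Fin n) (Fin n) ℂ) :
    let D := diagonal fun i => (d i : ℂ)
    ∑ i, ∑ j, ‖K i j‖ ^ 2 * |d i - d j| ≤ n * (hsNorm K * hsNorm (D * K - K * D)) := by
  refine le_of_eq_of_le (Finset.sum_congr rfl fun i _ => Finset.sum_congr rfl fun j _ => ?_)
    (sum_norm_mul_norm_le_hsNorm_mul_hsNorm _ _)
  rw [diagonal_mul_sub_mul_diagonal_apply, norm_mul, ← Complex.ofReal_sub, Complex.norm_real,
    Real.norm_eq_abs]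
  ring

structure IsCommutingApprox (H₁ H₂ A₁ A₂ : Matrix (Fin n) (Fin n) ℂ) (r₁ r₂ : ℝ) : Prop where
  isHermitian_left : A₁.IsHermitian
  isHermitian_right : A₂.IsHermitian
  opNorm_left_le : opNorm A₁ ≤ 1
  opNorm_right_le : opNorm A₂ ≤ 1
  commute : Commute A₁ A₂
  commute_left : Commute H₁ A₁
  hsNorm_sub_left_le : hsNorm (H₁ - A₁) ≤ r₁
  hsNorm_sub_right_le : hsNorm (H₂ - A₂) ≤ r₂

lemma IsCommutingApprox.conjStarAlgAut {H₁ H₂ A₁ A₂ : Matrix (Fin n) (Fin n) ℂ} {r₁ r₂ : ℝ}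
    (h : IsCommutingApprox H₁ H₂ A₁ A₂ r₁ r₂) (u : unitary (Matrix (Fin n) (Fin n) ℂ)) :
    IsCommutingApprox (conjStarAlgAut ℂ _ u H₁) (conjStarAlgAut ℂ _ u H₂)
      (conjStarAlgAut ℂ _ u A₁) (conjStarAlgAut ℂ _ u A₂) r₁ r₂ where
  isHermitian_left := h.isHermitian_left.isSelfAdjoint.map _
  isHermitian_right := h.isHermitian_right.isSelfAdjoint.map _
  opNorm_left_le := (opNorm_conjStarAlgAut u A₁).trans_le h.opNorm_left_le
  opNorm_right_le := (opNorm_conjStarAlgAut u A₂).trans_le h.opNorm_right_le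
  commute := h.commute.map _
  commute_left := h.commute_left.map _
  hsNorm_sub_left_le := by rw [← map_sub, hsNorm_conjStarAlgAut]; exact h.hsNorm_sub_left_le
  hsNorm_sub_right_le := by rw [← map_sub, hsNorm_conjStarAlgAut]; exact h.hsNorm_sub_right_le

theorem exists_isCommutingApprox_diagonal {d : Fin n → ℝ} (hd : ∀ i, |d i| ≤ 1)
    {K : Matrix (Fin n) (Fin n) ℂ} (hK : K.IsHermitian) (hKop : opNorm K ≤ 1) {ε : ℝ}
    (hε : 0 < ε) :
    let D := diagonal fun i => (d i : ℂ)
    ∃ A₁ A₂, IsCommutingApprox D K A₁ A₂ ε √(hsNorm (D * K - K * D) / ε) := by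
  intro D
  obtain ⟨t, ht⟩ := exists_shift_sum_floor_ne_le d (fun i j => ‖K i j‖ ^ 2)
    (fun _ _ => by positivity) hε
  set k : Fin n → ℤ := fun i => ⌊(d i - t) / ε⌋
  -- `t + ε * k i` is the left end of the bin of `d i`; clamping keeps it in `[-1, 1]`.
  set g : ℤ → ℝ := fun m => max (-1) (t + ε * m)
  have hbin : ∀ i, |g (k i)| ≤ 1 ∧ |d i - g (k i)| ≤ ε := fun i => by
    have h₁ : (k i : ℝ) * ε ≤ d i - t := (le_div_iff₀ hε).1 (Int.floor_le _)
    have h₂ : d i - t < (k i + 1) * ε := (div_lt_iff₀ hε).1 (Int.lt_floor_add_one _)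
    have := abs_le.1 (hd i)
    simp only [g, abs_le]
    refine ⟨⟨le_max_left _ _, max_le (by norm_num) (by linarith)⟩, ?_, ?_⟩
    · linarith [max_le (by linarith : (-1 : ℝ) ≤ d i + ε) (by linarith : t + ε * k i ≤ d i + ε)]
    · linarith [le_max_right (-1 : ℝ) (t + ε * k i)]
  refine ⟨diagonal fun i => (g (k i) : ℂ), pinch k K,
    ⟨isHermitian_diagonal_iff.2 fun i => Complex.conj_ofReal _, hK.pinch k, ?_,
      (opNorm_pinch_le k K).trans hKop, commute_diagonal_comp_pinch k (fun m => (g m : ℂ)) K,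
      commute_diagonal _ _, ?_, ?_⟩⟩
  · rw [opNorm_eq_norm, l2_opNorm_diagonal]
    exact pi_norm_le_iff_of_nonneg zero_le_one |>.2 fun i => by simpa using (hbin i).1
  · rw [diagonal_sub]
    exact hsNorm_diagonal_le hε.le fun i => by simpa [← Complex.ofReal_sub] using (hbin i).2
  · refine hsNorm_le_of_sum_norm_sq_le (Real.sqrt_nonneg _) ?_
    calc ∑ i, ∑ j, ‖(K - pinch k K) i j‖ ^ 2
        = ∑ i, ∑ j, (if k i = k j then 0 else ‖K i j‖ ^ 2) := by
          simp only [sub_pinch_apply, apply_ite (fun z : ℂ => ‖z‖ ^ 2), norm_zero,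
            zero_pow two_ne_zero]
      _ ≤ ε⁻¹ * ∑ i, ∑ j, ‖K i j‖ ^ 2 * |d i - d j| := ht
      _ ≤ ε⁻¹ * (n * (hsNorm K * hsNorm (D * K - K * D))) := by
          gcongr; exact sum_norm_sq_mul_abs_sub_le d K
      _ ≤ ε⁻¹ * (n * (1 * hsNorm (D * K - K * D))) := by
          gcongr; exacts [hsNorm_nonneg _, (hsNorm_le_opNorm K).trans hKop]
      _ = n * √(hsNorm (D * K - K * D) / ε) ^ 2 := by
          rw [Real.sq_sqrt (div_nonneg (hsNorm_nonneg _) hε.le)]; ring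

theorem exists_isCommutingApprox {H₁ H₂ : Matrix (Fin n) (Fin n) ℂ} (hH₁ : H₁.IsHermitian)
    (hH₂ : H₂.IsHermitian) (hop₁ : opNorm H₁ ≤ 1) (hop₂ : opNorm H₂ ≤ 1) {ε : ℝ} (hε : 0 < ε) :
    ∃ A₁ A₂, IsCommutingApprox H₁ H₂ A₁ A₂ ε √(hsNorm (H₁ * H₂ - H₂ * H₁) / ε) := by
  set U := hH₁.eigenvectorUnitary
  set φ := conjStarAlgAut ℂ (Matrix (Fin n) (Fin n) ℂ) (star U)
  have hD : φ H₁ = diagonal fun i => (hH₁.eigenvalues i : ℂ) :=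
    hH₁.conjStarAlgAut_star_eigenvectorUnitary
  have hd : ∀ i, |hH₁.eigenvalues i| ≤ 1 := fun i => by
    have h := opNorm_conjStarAlgAut (star U) H₁
    rw [hD, opNorm_eq_norm, l2_opNorm_diagonal] at h
    simpa using (norm_le_pi_norm _ i).trans (h.trans_le hop₁)
  obtain ⟨B₁, B₂, hB⟩ := exists_isCommutingApprox_diagonal hd (hH₂.isSelfAdjoint.map φ)
    ((opNorm_conjStarAlgAut _ H₂).trans_le hop₂) hε
  have hφ : ∀ X, conjStarAlgAut ℂ _ U (φ X) = X := fun X => by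
    rw [← conjStarAlgAut_mul_apply, mul_star_self, map_one, StarAlgEquiv.one_apply]
  have hB' := hB.conjStarAlgAut U
  rw [← hD, ← map_mul, ← map_mul, ← map_sub, hsNorm_conjStarAlgAut, hφ, hφ] at hB'
  exact ⟨_, _, hB'⟩

theorem almost_commuting_hs_sharp_general (n : ℕ) (H₁ H₂ : Matrix (Fin n) (Fin n) ℂ)
    (hH₁ : H₁.IsHermitian) (hH₂ : H₂.IsHermitian)
    (hop₁ : opNorm H₁ ≤ 1) (hop₂ : opNorm H₂ ≤ 1)
    (δ : ℝ) (hδ : δ = hsNorm (H₁ * H₂ - H₂ * H₁)) (hδ16 : δ ≤ 1 / 16) :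
    ∃ A₁ A₂ : Matrix (Fin n) (Fin n) ℂ,
      A₁.IsHermitian ∧ A₂.IsHermitian ∧
      opNorm A₁ ≤ 1 ∧ opNorm A₂ ≤ 1 ∧
      A₁ * A₂ - A₂ * A₁ = 0 ∧
      H₁ * A₁ - A₁ * H₁ = 0 ∧
      hsNorm (H₁ - A₁) ≤ 2 * δ ^ ((1 : ℝ) / 4) ∧
      hsNorm (H₂ - A₂) ≤ Real.sqrt 3 * δ ^ ((1 : ℝ) / 4) := by
  rcases (hδ ▸ hsNorm_nonneg _ : 0 ≤ δ).eq_or_lt with hδ0 | hδpos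
  · have hC : H₁ * H₂ - H₂ * H₁ = 0 := eq_zero_of_hsNorm_eq_zero (hδ ▸ hδ0.symm)
    refine ⟨H₁, H₂, hH₁, hH₂, hop₁, hop₂, hC, sub_self _, ?_, ?_⟩ <;> simp [hsNorm, ← hδ0]
  set q := δ ^ ((1 : ℝ) / 4)
  have hq : 0 < q := Real.rpow_pos_of_pos hδpos _
  have hδq : δ = q ^ 4 := by rw [← Real.rpow_natCast, ← Real.rpow_mul hδpos.le]; norm_num
  have hq1 : q ≤ 1 := (pow_le_one_iff_of_nonneg hq.le four_ne_zero).1 (by linarith)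
  obtain ⟨A₁, A₂, h⟩ := exists_isCommutingApprox hH₁ hH₂ hop₁ hop₂ (pow_pos hq 2)
  rw [← hδ, hδq, show q ^ 4 / q ^ 2 = q ^ 2 by field_simp, Real.sqrt_sq hq.le] at h
  refine ⟨A₁, A₂, h.isHermitian_left, h.isHermitian_right, h.opNorm_left_le, h.opNorm_right_le,
    sub_eq_zero.2 h.commute.eq, sub_eq_zero.2 h.commute_left.eq, h.hsNorm_sub_left_le.trans ?_,
    h.hsNorm_sub_right_le.trans ?_⟩
  · nlinarith
  · exact le_mul_of_one_le_left hq.le (Real.one_le_sqrt.2 (by norm_num))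

/-- **Theorem (main).** If `H₁, H₂` are Hermitian contractions with
`δ = ‖[H₁,H₂]‖_tr ≤ 1/16`, then there are commuting Hermitian contractions `A₁, A₂`
with `[H₁,A₁] = 0` and `‖H₁ - A₁‖_tr ≤ 2 δ^{1/4}` and `‖H₂ - A₂‖_tr ≤ √3 δ^{1/4}`. -/
theorem almost_commuting_hs_sharp (n : ℕ) (hn : 0 < n) (H₁ H₂ : Matrix (Fin n) (Fin n) ℂ)
    (hH₁ : H₁.IsHermitian) (hH₂ : H₂.IsHermitian)
    (hop₁ : opNorm H₁ ≤ 1) (hop₂ : opNorm H₂ ≤ 1)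
    (δ : ℝ) (hδ : δ = hsNorm (H₁ * H₂ - H₂ * H₁)) (hδ16 : δ ≤ 1 / 16) :
    ∃ A₁ A₂ : Matrix (Fin n) (Fin n) ℂ,
      A₁.IsHermitian ∧ A₂.IsHermitian ∧
      opNorm A₁ ≤ 1 ∧ opNorm A₂ ≤ 1 ∧
      A₁ * A₂ - A₂ * A₁ = 0 ∧
      H₁ * A₁ - A₁ * H₁ = 0 ∧
      hsNorm (H₁ - A₁) ≤ 2 * δ ^ ((1 : ℝ) / 4) ∧
      hsNorm (H₂ - A₂) ≤ Real.sqrt 3 * δ ^ ((1 : ℝ) / 4) :=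
  almost_commuting_hs_sharp_general n H₁ H₂ hH₁ hH₂ hop₁ hop₂ δ hδ hδ16
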